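/- arXiv:1909.07684 — 3 statements merged into one kernel-verified Lean document; each statement's English description precedes it below -/
import Mathlib

section
/- Let C ≥ 0, let f : [0,∞) → [0,1) be differentiable and let g : [0,∞) → [0,∞) be continuous. Assume that f'(t) + g(t) ≤ C·P₁(f(t))·g(t) for all t ≥ 0, and that C·P₁(f(0)) < 1. Then for all t ≥ 0 one has f(t) ≤ f(0) and, more precisely, f(t) + (1 − C·P₁(f(0)))·∫₀^t g(s) ds ≤ f(0). -/
/-- `P₁(z) = 4z/(1−z) + 5z²/(1−z)² + 4z³/(1−z)³`. -/
noncomputable def P1 (z : ℝ) : ℝ :=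
  4 * z / (1 - z) + 5 * z ^ 2 / (1 - z) ^ 2 + 4 * z ^ 3 / (1 - z) ^ 3

lemma P1_mono {a b : ℝ} (ha : 0 ≤ a) (hab : a ≤ b) (hb : b < 1) : P1 a ≤ P1 b := by
  have h1 : (0:ℝ) < 1 - b := by linarith
  have h2 : 1 - b ≤ 1 - a := by linarith
  have hb0 : 0 ≤ b := ha.trans hab
  unfold P1
  gcongr

lemma P1_nonneg {a : ℝ} (ha : 0 ≤ a) (ha1 : a < 1) : 0 ≤ P1 a := by
  have h1 : (0:ℝ) < 1 - a := by linarith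
  unfold P1
  positivity

lemma P1_contAt {a : ℝ} (ha1 : a < 1) : ContinuousAt P1 a := by
  have h1 : (1:ℝ) - a ≠ 0 := by intro h; linarith
  unfold P1
  fun_prop (disch := first | exact h1 | positivity)

/-- A priori bound from the differential inequality `f' + g ≤ C P₁(f) g` when
`C P₁(f(0)) < 1`: for all `t ≥ 0`, `f(t) ≤ f(0)` and
`f(t) + (1 − C P₁(f(0))) ∫₀ᵗ g ≤ f(0)`. -/
theorem apriori_bound (C : ℝ) (hC : 0 ≤ C) (f f' g : ℝ → ℝ)
    (hf_range : ∀ t, 0 ≤ t → f t ∈ Set.Ico (0 : ℝ) 1)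
    (hf_deriv : ∀ t, 0 ≤ t → HasDerivWithinAt f (f' t) (Set.Ici 0) t)
    (hg_cont : ContinuousOn g (Set.Ici 0))
    (hg_nonneg : ∀ t, 0 ≤ t → 0 ≤ g t)
    (hode : ∀ t, 0 ≤ t → f' t + g t ≤ C * P1 (f t) * g t)
    (hsmall : C * P1 (f 0) < 1) :
    ∀ t, 0 ≤ t →
      f t ≤ f 0 ∧ f t + (1 - C * P1 (f 0)) * ∫ s in (0 : ℝ)..t, g s ≤ f 0 := by
  have hf0 := hf_range 0 le_rfl
  have hfc : ContinuousOn f (Set.Ici 0) := fun x hx => (hf_deriv x hx).continuousWithinAt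
  -- choose r ∈ (f 0, 1) with C * P1 r < 1
  obtain ⟨r, hr0, hr1, hCr⟩ : ∃ r, f 0 < r ∧ r < 1 ∧ C * P1 r < 1 := by
    have hcont : ContinuousAt (fun z => C * P1 z) (f 0) :=
      (continuousAt_const.mul (P1_contAt hf0.2))
    have hev : ∀ᶠ z in nhds (f 0), C * P1 z < 1 ∧ z < 1 := by
      filter_upwards [hcont.eventually_lt continuousAt_const hsmall,
        (Filter.tendsto_id (x := nhds (f 0))).eventually_lt_const hf0.2] with z h1 h2
      exact ⟨h1, h2⟩
    obtain ⟨δ, hδ, hball⟩ := Metric.eventually_nhds_iff.1 hev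
    have hd : dist (f 0 + δ/2) (f 0) < δ := by
      rw [Real.dist_eq, show f 0 + δ/2 - f 0 = δ/2 by ring, abs_of_nonneg (by linarith)]
      linarith
    exact ⟨f 0 + δ/2, by linarith, (hball hd).2, (hball hd).1⟩
  -- Step 1 : f x ≤ f 0 for all x ≥ 0
  have key : ∀ x, 0 ≤ x → f x ≤ f 0 := by
    intro T hT
    rcases eq_or_lt_of_le hT with rfl | hT'
    · exact le_rfl
    have main : ∀ ε : ℝ, 0 < ε → ε * T < r - f 0 → f T ≤ f 0 + ε * T := by
      intro ε hε hεT
      set s : Set ℝ := {x | f x ≤ f 0 + ε * x} with hs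
      have hsub : Set.Icc 0 T ⊆ s := by
        apply IsClosed.Icc_subset_of_forall_exists_gt
        · have hco : ContinuousOn (fun x => f x - (f 0 + ε * x)) (Set.Icc 0 T) :=
            ((hfc.mono (Set.Icc_subset_Ici_self)).sub (by fun_prop))
          have hcl := hco.preimage_isClosed_of_isClosed isClosed_Icc (isClosed_Iic (a := (0:ℝ)))
          convert hcl using 1
          ext x
          simp only [Set.mem_inter_iff, Set.mem_setOf_eq, Set.mem_preimage, Set.mem_Iic, hs]
          constructor
          · rintro ⟨h1, h2⟩; exact ⟨h2, by linarith⟩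
          · rintro ⟨h2, h1⟩; exact ⟨by linarith, h2⟩
        · simp [hs]
        · rintro x ⟨hxs, hx0, hxT⟩ y hy
          have hfx : f x ≤ r := by
            have h4 : ε * x ≤ ε * T := by nlinarith
            have h5 : f x ≤ f 0 + ε * x := hxs
            linarith
          have hfx1 := hf_range x hx0
          have hf'x : f' x < ε := by
            have h1 := hode x hx0
            have h2 : C * P1 (f x) ≤ C * P1 r :=
              mul_le_mul_of_nonneg_left (P1_mono hfx1.1 hfx hr1) hC
            have h3 := hg_nonneg x hx0
            nlinarith [mul_le_mul_of_nonneg_right (h2.trans hCr.le) h3]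
          have hslope : Filter.Tendsto (slope f x) (nhdsWithin x (Set.Ioi x)) (nhds (f' x)) :=
            ((hasDerivWithinAt_iff_tendsto_slope).1 (hf_deriv x hx0)).mono_left
              (nhdsWithin_mono _ (fun z hz => ⟨le_of_lt (lt_of_le_of_lt hx0 hz), ne_of_gt hz⟩))
          have hev : ∀ᶠ z in nhdsWithin x (Set.Ioi x), slope f x z < ε :=
            hslope.eventually_lt_const hf'x
          have hmem : Set.Ioc x y ∈ nhdsWithin x (Set.Ioi x) :=
            Ioc_mem_nhdsGT_of_mem ⟨le_rfl, hy⟩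
          obtain ⟨z, hz1, hz2⟩ := (hev.and (Filter.eventually_of_mem hmem fun _ h => h)).exists
          refine ⟨z, ?_, hz2⟩
          have hzx : 0 < z - x := by have := hz2.1; linarith
          rw [slope_def_field, div_lt_iff₀ hzx] at hz1
          have h5 : f x ≤ f 0 + ε * x := hxs
          show f z ≤ f 0 + ε * z
          nlinarith
      have := hsub ⟨hT, le_rfl⟩
      simpa [hs] using this
    by_contra hcon
    push_neg at hcon
    set ε := min ((r - f 0) / (2 * T)) ((f T - f 0) / (2 * T)) with hεdef
    have hε : 0 < ε := by
      apply lt_min <;> apply div_pos <;> linarith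
    have h1 : ε * T < r - f 0 := by
      have hm := mul_le_mul_of_nonneg_right
        (min_le_left ((r - f 0) / (2 * T)) ((f T - f 0) / (2 * T))) hT
      have heq : (r - f 0) / (2 * T) * T = (r - f 0) / 2 := by field_simp
      rw [heq] at hm
      rw [hεdef]
      linarith
    have h2 := main ε hε h1
    have h3 : ε * T ≤ (f T - f 0) / 2 := by
      have := min_le_right ((r - f 0) / (2 * T)) ((f T - f 0) / (2 * T))
      have hm := mul_le_mul_of_nonneg_right
        (min_le_right ((r - f 0) / (2 * T)) ((f T - f 0) / (2 * T))) hT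
      have heq : (f T - f 0) / (2 * T) * T = (f T - f 0) / 2 := by field_simp
      rw [heq] at hm
      rw [hεdef]
      linarith
    linarith
  -- Step 2 : FTC inequality
  intro t ht
  have hftle := key t ht
  set CP := C * P1 (f 0) with hCP
  have hCPnn : 0 ≤ CP := mul_nonneg hC (P1_nonneg hf0.1 hf0.2)
  have hφint : MeasureTheory.IntegrableOn (fun s => (CP - 1) * g s) (Set.Icc 0 t) := by
    exact (continuousOn_const.mul (hg_cont.mono Set.Icc_subset_Ici_self)).integrableOn_Icc
  have hineq : f t - f 0 ≤ ∫ y in (0:ℝ)..t, (CP - 1) * g y := by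
    apply intervalIntegral.sub_le_integral_of_hasDeriv_right_of_le ht
      (hfc.mono Set.Icc_subset_Ici_self)
      (fun x hx => (hf_deriv x hx.1.le).mono (fun z hz => le_of_lt (lt_trans hx.1 hz)))
      hφint
    intro x hx
    have hx0 : 0 ≤ x := hx.1.le
    have h1 := hode x hx0
    have h2 : C * P1 (f x) ≤ CP :=
      mul_le_mul_of_nonneg_left (P1_mono (hf_range x hx0).1 (key x hx0) hf0.2) hC
    have h3 := hg_nonneg x hx0
    nlinarith [mul_le_mul_of_nonneg_right h2 h3]
  rw [intervalIntegral.integral_const_mul] at hineq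
  have hgint : 0 ≤ ∫ s in (0:ℝ)..t, g s :=
    intervalIntegral.integral_nonneg ht (fun u hu => hg_nonneg u hu.1)
  constructor
  · exact hftle
  · nlinarith
end

section
/- Let C ≥ 0, let f : [0,∞) → [0,1) be differentiable and let g : [0,∞) → [0,∞) be continuous. Assume that f'(t) + g(t) ≤ C·P₁(f(t))·g(t) and f(t) ≤ g(t) for all t ≥ 0, and that C·P₁(f(0)) < 1. Then f decays exponentially: f(t) ≤ f(0)·e^{−(1 − C·P₁(f(0)))t} for all t ≥ 0. -/
lemma P1_continuousAt {z : ℝ} (hz : z < 1) : ContinuousAt P1 z := by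
  have h : (1:ℝ) - z ≠ 0 := by linarith
  unfold P1
  apply ContinuousAt.add
  apply ContinuousAt.add
  · exact (continuousAt_const.mul continuousAt_id).div
      (continuousAt_const.sub continuousAt_id) h
  · exact (continuousAt_const.mul (continuousAt_id.pow 2)).div
      ((continuousAt_const.sub continuousAt_id).pow 2) (by positivity)
  · exact (continuousAt_const.mul (continuousAt_id.pow 3)).div
      ((continuousAt_const.sub continuousAt_id).pow 3) (by positivity)

/-- Exponential decay from the differential inequality `f' + g ≤ C P₁(f) g`
together with the Poincaré-type bound `f ≤ g`, when `C P₁(f(0)) < 1`: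
`f(t) ≤ f(0) e^{−(1 − C P₁(f(0)))t}` for all `t ≥ 0`. -/
theorem exponential_decay (C : ℝ) (hC : 0 ≤ C) (f f' g : ℝ → ℝ)
    (hf_range : ∀ t, 0 ≤ t → f t ∈ Set.Ico (0 : ℝ) 1)
    (hf_deriv : ∀ t, 0 ≤ t → HasDerivWithinAt f (f' t) (Set.Ici 0) t)
    (hg_cont : ContinuousOn g (Set.Ici 0))
    (hg_nonneg : ∀ t, 0 ≤ t → 0 ≤ g t)
    (hode : ∀ t, 0 ≤ t → f' t + g t ≤ C * P1 (f t) * g t)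
    (hfg : ∀ t, 0 ≤ t → f t ≤ g t)
    (hsmall : C * P1 (f 0) < 1) :
    ∀ t, 0 ≤ t → f t ≤ f 0 * Real.exp (-(1 - C * P1 (f 0)) * t) := by
  have hf0 : 0 ≤ f 0 := (hf_range 0 le_rfl).1
  have hf01 : f 0 < 1 := (hf_range 0 le_rfl).2
  -- Step 1: for suitable ε, a perturbed exponential bound
  have step : ∀ ε : ℝ, 0 < ε → ε < 1 → f 0 + ε < 1 → C * P1 (f 0 + ε) < 1 →
      ∀ t, 0 ≤ t → f t ≤ (f 0 + ε) * Real.exp (-((1 - C * P1 (f 0 + ε)) * (1 - ε)) * t) := by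
    intro ε hε hε1 hfε hCε t ht
    set κ := 1 - C * P1 (f 0 + ε) with hκdef
    have hκ : 0 < κ := by linarith
    set lam := κ * (1 - ε) with hlamdef
    have hlam0 : 0 ≤ lam := by nlinarith
    have hlamκ : lam < κ := by nlinarith
    set B : ℝ → ℝ := fun s => (f 0 + ε) * Real.exp (-lam * s) with hBdef
    have hB' : ∀ x : ℝ, HasDerivAt B (-lam * B x) x := by
      intro x
      have h1 : HasDerivAt (fun s : ℝ => -lam * s) (-lam) x := by
        simpa using (hasDerivAt_id x).const_mul (-lam)
      have h2 : HasDerivAt (fun s : ℝ => Real.exp (-lam * s))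
          (Real.exp (-lam * x) * -lam) x := (Real.hasDerivAt_exp (-lam * x)).comp x h1
      have := h2.const_mul (f 0 + ε)
      simpa [hBdef, mul_comm, mul_left_comm, mul_assoc] using this
    have main : ∀ x ∈ Set.Icc (0:ℝ) t, f x ≤ B x := by
      apply image_le_of_deriv_right_lt_deriv_boundary
        (f' := f') (B := B) (B' := fun x => -lam * B x)
      · intro x hx
        exact ((hf_deriv x hx.1).continuousWithinAt).mono
          (Set.Icc_subset_Ici_self)
      · intro x hx
        exact (hf_deriv x hx.1).mono (Set.Ici_subset_Ici.2 hx.1)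
      · simpa [hBdef] using (by linarith : f 0 ≤ f 0 + ε)
      · exact hB'
      · intro x hx hfx
        have hx0 : 0 ≤ x := hx.1
        have hexp1 : Real.exp (-lam * x) ≤ 1 := by
          apply Real.exp_le_one_iff.2
          nlinarith
        have hBpos : 0 < B x := by
          have : 0 < Real.exp (-lam * x) := Real.exp_pos _
          have : 0 < f 0 + ε := by linarith
          positivity
        have hBle : B x ≤ f 0 + ε := by
          calc B x ≤ (f 0 + ε) * 1 := by
                apply mul_le_mul_of_nonneg_left hexp1 (by linarith)
            _ = f 0 + ε := mul_one _
        have hfxle : f x ≤ f 0 + ε := hfx ▸ hBle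
        have hP : P1 (f x) ≤ P1 (f 0 + ε) :=
          P1_mono (hf_range x hx0).1 hfxle hfε
        have hCP : C * P1 (f x) ≤ C * P1 (f 0 + ε) := mul_le_mul_of_nonneg_left hP hC
        have hgx : 0 ≤ g x := hg_nonneg x hx0
        have h1 : f' x ≤ -(1 - C * P1 (f x)) * g x := by
          have := hode x hx0; nlinarith
        have h2 : -(1 - C * P1 (f x)) * g x ≤ -κ * g x := by
          have : κ ≤ 1 - C * P1 (f x) := by linarith
          nlinarith
        have h3 : -κ * g x ≤ -κ * f x := by
          have := hfg x hx0; nlinarith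
        have h4 : -κ * f x < -lam * f x := by
          have hfxpos : 0 < f x := hfx ▸ hBpos
          nlinarith
        calc f' x ≤ -κ * f x := by linarith
          _ < -lam * f x := h4
          _ = -lam * B x := by rw [hfx]
    simpa [hBdef] using main t ⟨ht, le_rfl⟩
  -- Step 2: take ε → 0⁺
  intro t ht
  have hcont : ContinuousAt (fun ε : ℝ =>
      (f 0 + ε) * Real.exp (-((1 - C * P1 (f 0 + ε)) * (1 - ε)) * t)) 0 := by
    have hP : ContinuousAt (fun ε : ℝ => P1 (f 0 + ε)) 0 := by
      have h0 : ContinuousAt P1 (f 0 + 0) := P1_continuousAt (by simpa using hf01)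
      exact h0.comp (continuousAt_const.add continuousAt_id)
    exact (continuousAt_const.add continuousAt_id).mul
      (Real.continuous_exp.continuousAt.comp
        (((continuousAt_const.sub (continuousAt_const.mul hP)).mul
          (continuousAt_const.sub continuousAt_id)).neg.mul continuousAt_const))
  have hlim : Filter.Tendsto (fun ε : ℝ =>
      (f 0 + ε) * Real.exp (-((1 - C * P1 (f 0 + ε)) * (1 - ε)) * t)) (nhdsWithin 0 (Set.Ioi 0))
      (nhds (f 0 * Real.exp (-(1 - C * P1 (f 0)) * t))) := by
    have := hcont.tendsto.mono_left (nhdsWithin_le_nhds (s := Set.Ioi (0:ℝ)))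
    simpa using this
  have hev : ∀ᶠ ε in nhdsWithin (0:ℝ) (Set.Ioi 0),
      f t ≤ (f 0 + ε) * Real.exp (-((1 - C * P1 (f 0 + ε)) * (1 - ε)) * t) := by
    have hP : ContinuousAt (fun ε : ℝ => C * P1 (f 0 + ε)) 0 := by
      have h0 : ContinuousAt P1 (f 0 + 0) := P1_continuousAt (by simpa using hf01)
      exact ContinuousAt.mul continuousAt_const
        (h0.comp (continuousAt_const.add continuousAt_id))
    have h1 : ∀ᶠ ε in nhdsWithin (0:ℝ) (Set.Ioi 0), C * P1 (f 0 + ε) < 1 := by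
      have : ∀ᶠ ε in nhds (0:ℝ), C * P1 (f 0 + ε) < 1 :=
        hP.eventually_lt continuousAt_const (by simpa using hsmall)
      exact this.filter_mono nhdsWithin_le_nhds
    have h2 : ∀ᶠ ε in nhdsWithin (0:ℝ) (Set.Ioi 0), ε < 1 ∧ f 0 + ε < 1 := by
      have : ∀ᶠ ε in nhds (0:ℝ), ε < 1 ∧ f 0 + ε < 1 := by
        have ha : ∀ᶠ ε in nhds (0:ℝ), ε < 1 := eventually_lt_nhds one_pos
        have hb : ∀ᶠ ε in nhds (0:ℝ), f 0 + ε < 1 := by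
          filter_upwards [eventually_lt_nhds (show (0:ℝ) < 1 - f 0 by linarith)] with ε h
          linarith
        exact ha.and hb
      exact this.filter_mono nhdsWithin_le_nhds
    have h3 : ∀ᶠ ε in nhdsWithin (0:ℝ) (Set.Ioi 0), (0:ℝ) < ε :=
      eventually_mem_nhdsWithin
    filter_upwards [h1, h2, h3] with ε hc hd he
    exact step ε he hd.1 hd.2 hc t ht
  exact ge_of_tendsto hlim hev
end

section
/- Let ν > 0 and γ ≥ 0, let f : [0,∞) → [0,1) be differentiable and let g : [0,∞) → [0,∞) be continuous. Assume that f'(t) + ν·g(t) ≤ (γ·P₂(f(t)) + ν·P₁(f(t)))·g(t) for all t ≥ 0, and that γ·P₂(f(0)) + ν·P₁(f(0)) < ν. Then for all t ≥ 0: (i) f(t) + (ν − γP₂(f(0)) − νP₁(f(0)))·∫₀^t g(s) ds ≤ f(0); and (ii) if in addition f(t) ≤ g(t) for all t ≥ 0, then f(t) ≤ f(0)·e^{−(ν − γP₂(f(0)) − νP₁(f(0)))t}. -/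
open scoped Topology
open Filter


/-- `P₂(z) = z/(1−z) + z²/(1−z)²`. -/
noncomputable def P2 (z : ℝ) : ℝ :=
  z / (1 - z) + z ^ 2 / (1 - z) ^ 2

lemma P_combo_mono (ν γ : ℝ) (hν : 0 ≤ ν) (hγ : 0 ≤ γ) {a b : ℝ}
    (ha : 0 ≤ a) (hab : a ≤ b) (hb : b < 1) :
    γ * P2 a + ν * P1 a ≤ γ * P2 b + ν * P1 b := by
  have ha1 : 0 < 1 - a := by linarith
  have hb1 : 0 < 1 - b := by linarith
  have hw : a / (1 - a) ≤ b / (1 - b) := by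
    rw [div_le_div_iff₀ ha1 hb1]; nlinarith
  have hw0 : 0 ≤ a / (1 - a) := div_nonneg ha ha1.le
  set u := a / (1 - a)
  set v := b / (1 - b)
  have hP1a : P1 a = 4 * u + 5 * u ^ 2 + 4 * u ^ 3 := by
    simp only [P1, u, div_pow, mul_div_assoc]
  have hP1b : P1 b = 4 * v + 5 * v ^ 2 + 4 * v ^ 3 := by
    simp only [P1, v, div_pow, mul_div_assoc]
  have hP2a : P2 a = u + u ^ 2 := by simp only [P2, u, div_pow]
  have hP2b : P2 b = v + v ^ 2 := by simp only [P2, v, div_pow]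
  rw [hP1a, hP1b, hP2a, hP2b]
  have h1 : u + u ^ 2 ≤ v + v ^ 2 := by nlinarith
  have h2 : 4 * u + 5 * u ^ 2 + 4 * u ^ 3 ≤ 4 * v + 5 * v ^ 2 + 4 * v ^ 3 := by nlinarith
  have := mul_le_mul_of_nonneg_left h1 hγ
  have := mul_le_mul_of_nonneg_left h2 hν
  linarith

/-- A priori bound and exponential decay from the differential inequality
`f' + ν g ≤ (γ P₂(f) + ν P₁(f)) g` when `γ P₂(f(0)) + ν P₁(f(0)) < ν`. -/
theorem extended_apriori_and_decay (ν γ : ℝ) (hν : 0 < ν) (hγ : 0 ≤ γ)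
    (f f' g : ℝ → ℝ)
    (hf_range : ∀ t, 0 ≤ t → f t ∈ Set.Ico (0 : ℝ) 1)
    (hf_deriv : ∀ t, 0 ≤ t → HasDerivWithinAt f (f' t) (Set.Ici 0) t)
    (hg_cont : ContinuousOn g (Set.Ici 0))
    (hg_nonneg : ∀ t, 0 ≤ t → 0 ≤ g t)
    (hode : ∀ t, 0 ≤ t → f' t + ν * g t ≤ (γ * P2 (f t) + ν * P1 (f t)) * g t)
    (hsmall : γ * P2 (f 0) + ν * P1 (f 0) < ν) :
    (∀ t, 0 ≤ t →
      f t + (ν - γ * P2 (f 0) - ν * P1 (f 0)) * ∫ s in (0 : ℝ)..t, g s ≤ f 0) ∧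
    ((∀ t, 0 ≤ t → f t ≤ g t) →
      ∀ t, 0 ≤ t →
        f t ≤ f 0 * Real.exp (-(ν - γ * P2 (f 0) - ν * P1 (f 0)) * t)) := by
  set c : ℝ := ν - γ * P2 (f 0) - ν * P1 (f 0) with hc_def
  have hc : 0 < c := by simp only [hc_def]; linarith
  have hf_cont : ContinuousOn f (Set.Ici 0) := fun t ht =>
    (hf_deriv t ht).continuousWithinAt
  -- continuity of the coefficient h t = γ P2 (f t) + ν P1 (f t)
  set h : ℝ → ℝ := fun t => γ * P2 (f t) + ν * P1 (f t) with hh_def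
  have hh_cont : ContinuousOn h (Set.Ici 0) := by
    have hne : ∀ t ∈ Set.Ici (0:ℝ), 1 - f t ≠ 0 := fun t ht => by
      have := (hf_range t ht).2; intro hcontra; linarith [sub_eq_zero.mp hcontra]
    have hwc : ContinuousOn (fun t => f t / (1 - f t)) (Set.Ici 0) :=
      hf_cont.div (continuousOn_const.sub hf_cont) hne
    have heq : ∀ t ∈ Set.Ici (0:ℝ), h t =
        γ * (f t / (1 - f t) + (f t / (1 - f t)) ^ 2) +
        ν * (4 * (f t / (1 - f t)) + 5 * (f t / (1 - f t)) ^ 2 +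
              4 * (f t / (1 - f t)) ^ 3) := by
      intro t _
      simp only [hh_def, P1, P2, div_pow, mul_div_assoc]
    refine ContinuousOn.congr ?_ heq
    fun_prop
  -- ode consequence: f' t ≤ (h t - ν) * g t
  have hode' : ∀ t, 0 ≤ t → f' t ≤ (h t - ν) * g t := by
    intro t ht
    have := hode t ht
    simp only [hh_def]
    nlinarith [this]
  -- Step 1: f t ≤ f 0 for all t ≥ 0
  have key : ∀ t, 0 ≤ t → f t ≤ f 0 := by
    by_contra hcon
    push_neg at hcon
    obtain ⟨t₀, ht₀, ht₀'⟩ := hcon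
    set B : Set ℝ := {t | 0 ≤ t ∧ f 0 < f t} with hB_def
    have hBne : B.Nonempty := ⟨t₀, ht₀, ht₀'⟩
    have hBbdd : BddBelow B := ⟨0, fun x hx => hx.1⟩
    set T : ℝ := sInf B with hT_def
    have hT0 : 0 ≤ T := le_csInf hBne fun x hx => hx.1
    have hpre : ∀ s, 0 ≤ s → s < T → f s ≤ f 0 := by
      intro s hs hsT
      by_contra hf0
      push_neg at hf0
      exact absurd (csInf_le hBbdd ⟨hs, hf0⟩) (not_le.2 hsT)
    have hfT : f T ≤ f 0 := by
      rcases eq_or_lt_of_le hT0 with hT0' | hT0'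
      · rw [← hT0']
      · have hne : (𝓝[Set.Ioo 0 T] T).NeBot := right_nhdsWithin_Ioo_neBot hT0'
        have htend : Filter.Tendsto f (𝓝[Set.Ioo 0 T] T) (𝓝 (f T)) :=
          (hf_cont T hT0).mono_left
            (nhdsWithin_mono _ fun x hx => le_of_lt hx.1)
        refine le_of_tendsto htend ?_
        filter_upwards [self_mem_nhdsWithin] with s hs
        exact hpre s hs.1.le hs.2
    have hhT : h T < ν := by
      have := P_combo_mono ν γ hν.le hγ (hf_range T hT0).1 hfT (hf_range 0 le_rfl).2
      simp only [hh_def]; linarith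
    -- get a right neighborhood on which h < ν
    have hev : ∀ᶠ s in 𝓝[Set.Ici 0] T, h s < ν :=
      (hh_cont T hT0).eventually_lt_const hhT
    rw [Filter.eventually_iff, mem_nhdsWithin] at hev
    obtain ⟨U, hUopen, hTU, hU⟩ := hev
    obtain ⟨δ, hδ, hball⟩ := Metric.isOpen_iff.1 hUopen T hTU
    set J : Set ℝ := Set.Icc T (T + δ / 2) with hJ_def
    have hJsub : J ⊆ Set.Ici 0 := fun x hx => le_trans hT0 hx.1
    have hanti : AntitoneOn f J := by
      refine antitoneOn_of_hasDerivWithinAt_nonpos (f' := f') (convex_Icc _ _)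
        (hf_cont.mono hJsub) ?_ ?_
      · intro x hx
        rw [interior_Icc] at hx
        exact (hf_deriv x (le_trans hT0 hx.1.le)).mono
          (Set.Subset.trans (interior_subset.trans hJsub) le_rfl)
      · intro x hx
        rw [interior_Icc] at hx
        have hx0 : (0:ℝ) ≤ x := le_trans hT0 hx.1.le
        have hxU : x ∈ U := by
          apply hball
          rw [Metric.mem_ball, Real.dist_eq, abs_lt]
          constructor <;> [linarith [hx.1]; linarith [hx.2]]
        have hhx : h x < ν := hU ⟨hxU, hx0⟩
        have := hode' x hx0
        nlinarith [hg_nonneg x hx0]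
    have hTmem : T ∈ J := ⟨le_refl _, by linarith⟩
    have hlb : T + δ / 2 ≤ T := by
      rw [hT_def]
      refine le_csInf hBne ?_
      intro b hb
      by_contra hblt
      push_neg at hblt
      rcases lt_or_ge b T with hbT | hbT
      · exact absurd hb.2 (not_lt.2 (hpre b hb.1 hbT))
      · have hbJ : b ∈ J := ⟨hbT, hblt.le⟩
        have : f b ≤ f T := hanti hTmem hbJ hbT
        exact absurd hb.2 (not_lt.2 (this.trans hfT))
    linarith
  -- bound on h
  have hhle : ∀ t, 0 ≤ t → h t ≤ ν - c := by
    intro t ht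
    have := P_combo_mono ν γ hν.le hγ (hf_range t ht).1 (key t ht) (hf_range 0 le_rfl).2
    simp only [hh_def, hc_def]; linarith
  have hf'le : ∀ t, 0 ≤ t → f' t ≤ -c * g t := by
    intro t ht
    have h1 := hode' t ht
    have h2 := hhle t ht
    nlinarith [hg_nonneg t ht]
  -- derivative of the primitive of g
  have hG : ∀ t, 0 ≤ t →
      HasDerivWithinAt (fun u => ∫ s in (0:ℝ)..u, g s) (g t) (Set.Ici 0) t := by
    intro t ht
    have hint : IntervalIntegrable g MeasureTheory.volume 0 t := by
      apply ContinuousOn.intervalIntegrable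
      refine hg_cont.mono fun x hx => ?_
      rw [Set.uIcc_of_le ht] at hx
      exact hx.1
    rcases eq_or_lt_of_le ht with ht' | ht'
    · rw [← ht']
      rw [← ht'] at hint
      exact intervalIntegral.integral_hasDerivWithinAt_right (t := Set.Ioi 0) hint
        ⟨Set.Ici 0, Filter.mem_of_superset self_mem_nhdsWithin Set.Ioi_subset_Ici_self,
          hg_cont.aestronglyMeasurable measurableSet_Ici⟩
        ((hg_cont 0 Set.self_mem_Ici).mono Set.Ioi_subset_Ici_self)
    · exact (intervalIntegral.integral_hasDerivAt_right hint
        ⟨Set.Ici 0, Ici_mem_nhds ht',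
          hg_cont.aestronglyMeasurable measurableSet_Ici⟩
        (hg_cont.continuousAt (Ici_mem_nhds ht'))).hasDerivWithinAt
  constructor
  · -- part (i)
    set F : ℝ → ℝ := fun t => f t + c * ∫ s in (0:ℝ)..t, g s with hF_def
    have hFderiv : ∀ t, 0 ≤ t →
        HasDerivWithinAt F (f' t + c * g t) (Set.Ici 0) t := fun t ht =>
      (hf_deriv t ht).add ((hG t ht).const_mul c)
    have hFanti : AntitoneOn F (Set.Ici 0) := by
      refine antitoneOn_of_hasDerivWithinAt_nonpos (f' := fun t => f' t + c * g t)
        (convex_Ici 0) (fun t ht => (hFderiv t ht).continuousWithinAt) ?_ ?_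
      · intro x hx
        rw [interior_Ici] at hx
        exact ((hFderiv x hx.le).mono interior_subset)
      · intro x hx
        rw [interior_Ici] at hx
        show f' x + c * g x ≤ 0
        have := hf'le x hx.le
        linarith
    intro t ht
    have := hFanti (Set.self_mem_Ici) ht ht
    simpa [hF_def, intervalIntegral.integral_same] using this
  · -- part (ii)
    intro hfg t ht
    set φ : ℝ → ℝ := fun t => f t * Real.exp (c * t) with hφ_def
    have hexp : ∀ s : ℝ, HasDerivAt (fun u => Real.exp (c * u))
        (Real.exp (c * s) * c) s := fun s => by
      simpa using ((hasDerivAt_id s).const_mul c).exp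
    have hφderiv : ∀ s, 0 ≤ s →
        HasDerivWithinAt φ
          (f' s * Real.exp (c * s) + f s * (Real.exp (c * s) * c))
          (Set.Ici 0) s := fun s hs =>
      (hf_deriv s hs).mul (hexp s).hasDerivWithinAt
    have hφanti : AntitoneOn φ (Set.Ici 0) := by
      refine antitoneOn_of_hasDerivWithinAt_nonpos
        (f' := fun s => f' s * Real.exp (c * s) + f s * (Real.exp (c * s) * c))
        (convex_Ici 0) (fun s hs => (hφderiv s hs).continuousWithinAt) ?_ ?_
      · intro x hx
        rw [interior_Ici] at hx
        exact (hφderiv x hx.le).mono interior_subset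
      · intro x hx
        rw [interior_Ici] at hx
        show f' x * Real.exp (c * x) + f x * (Real.exp (c * x) * c) ≤ 0
        have h1 := hf'le x hx.le
        have h2 := hfg x hx.le
        have h3 : (0:ℝ) < Real.exp (c * x) := Real.exp_pos _
        have h4 := mul_le_mul_of_nonneg_right h1 h3.le
        have h5 := mul_le_mul_of_nonneg_right h2 (mul_pos h3 hc).le
        nlinarith [h4, h5]
    have hφle : φ t ≤ φ 0 := hφanti Set.self_mem_Ici ht ht
    have h0 : φ 0 = f 0 := by simp [hφ_def]
    have hE : (0:ℝ) < Real.exp (c * t) := Real.exp_pos _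
    have : f t * Real.exp (c * t) ≤ f 0 := by rw [← h0]; exact hφle
    have hgoal : f t ≤ f 0 * Real.exp (-(c * t)) := by
      rw [Real.exp_neg, ← div_eq_mul_inv, le_div_iff₀ hE]
      exact this
    calc f t ≤ f 0 * Real.exp (-(c * t)) := hgoal
      _ = f 0 * Real.exp (-c * t) := by ring_nf
end
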